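/- The K-linear map from Iuₙ to uₙ ⋉ uₙ* sending x_{ij} ↦ (e_{ij}, 0) for i < j, x_{ij} ↦ (0, e_{ji}*) for i > j, a_i ↦ (e_{ii}, 0), and b_i ↦ (0, 2 e_{ii}*) is an isomorphism of Lie algebras. -/

import Mathlib

/-- Index set for the basis of `Iuₙ`: the off-diagonal pairs indexing the `x_{ij}` (`i ≠ j`),
then the `a_i`'s, then the `b_i`'s. -/
abbrev IuIdx (n : ℕ) : Type := { p : Fin n × Fin n // p.1 ≠ p.2 } ⊕ (Fin n ⊕ Fin n)

/-- `Iuₙ`: the free `K`-vector space on the basis `{x_{ij} : i ≠ j} ∪ {a_i} ∪ {b_i}`. -/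
abbrev Iu (n : ℕ) (K : Type*) [Field K] : Type _ := IuIdx n →₀ K

variable (n : ℕ) (K : Type*) [Field K]

/-- The basis element `x_{ij}` (`i ≠ j`). -/
noncomputable def xE (i j : Fin n) (h : i ≠ j) : Iu n K :=
  Finsupp.single (Sum.inl ⟨(i, j), h⟩) 1

/-- The basis element `a_i`. -/
noncomputable def aE (i : Fin n) : Iu n K := Finsupp.single (Sum.inr (Sum.inl i)) 1

/-- The basis element `b_i`. -/
noncomputable def bE (i : Fin n) : Iu n K := Finsupp.single (Sum.inr (Sum.inr i)) 1

/-- `x_{ij}` as a total function (junk value `0` when `i = j`). -/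
noncomputable def xe (i j : Fin n) : Iu n K := if h : i ≠ j then xE n K i j h else 0

/-- The length `λ(i,j)`: equals `j - i` if `i < j`, and `n - (i - j)` if `i > j`. -/
def lam (n : ℕ) (i j : Fin n) : ℕ := (j - i : Fin n).val

/-- The bracket of `Iuₙ` on basis elements:
`[x_{ij}, x_{kl}] = δ_{jk} x_{il} - δ_{li} x_{kj}` if `λ(i,j) + λ(k,l) < n` and `0` otherwise
(unless both `j = k` and `l = i`); `[x_{ij}, x_{ji}] = ½(b_i - b_j)`;
`[a_i, x_{jk}] = (δ_{ij} - δ_{ik}) x_{jk}`; `[b_i, x_{jk}] = 0`;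
`[a_i, a_j] = [b_i, b_j] = [a_i, b_j] = 0`; extended antisymmetrically. -/
noncomputable def bb : IuIdx n → IuIdx n → Iu n K
  | Sum.inl ⟨(i, j), _⟩, Sum.inl ⟨(k, l), _⟩ =>
      if k = j ∧ l = i then ((2 : K)⁻¹) • (bE n K i - bE n K j)
      else if lam n i j + lam n k l < n then
        (if j = k then xe n K i l else 0) - (if l = i then xe n K k j else 0)
      else 0
  | Sum.inr (Sum.inl i), Sum.inl ⟨(j, k), _⟩ =>
      (((if i = j then 1 else 0) : K) - ((if i = k then 1 else 0) : K)) • xe n K j k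
  | Sum.inl ⟨(j, k), _⟩, Sum.inr (Sum.inl i) =>
      -((((if i = j then 1 else 0) : K) - ((if i = k then 1 else 0) : K)) • xe n K j k)
  | _, _ => 0

/-- The bilinear bracket of `Iuₙ`, extended bilinearly from its values on basis elements. -/
noncomputable def br : Iu n K →ₗ[K] Iu n K →ₗ[K] Iu n K :=
  Finsupp.lift (Iu n K →ₗ[K] Iu n K) K (IuIdx n) fun s =>
    Finsupp.lift (Iu n K) K (IuIdx n) fun t => bb n K s t

variable (n : ℕ) (K : Type*) [Field K]

attribute [local instance 100] LieRing.ofAssociativeRing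

/-- `uₙ`: the Lie algebra of upper triangular `n × n` matrices over `K`, as a Lie
subalgebra of the matrix algebra (whose bracket is the commutator). -/
def un : LieSubalgebra K (Matrix (Fin n) (Fin n) K) where
  carrier := {M | ∀ i j : Fin n, j < i → M i j = 0}
  add_mem' := by
    intro a b ha hb i j hij
    simp only [Matrix.add_apply, ha i j hij, hb i j hij, add_zero]
  zero_mem' := by intro i j hij; simp
  smul_mem' := by
    intro c a ha i j hij
    simp only [Matrix.smul_apply, ha i j hij, smul_zero]
  lie_mem' := by
    intro x y hx hy
    have key : ∀ a b : Matrix (Fin n) (Fin n) K,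
        (∀ i j : Fin n, j < i → a i j = 0) → (∀ i j : Fin n, j < i → b i j = 0) →
        ∀ i j : Fin n, j < i → (a * b) i j = 0 := by
      intro a b ha hb i j hij
      rw [Matrix.mul_apply]
      apply Finset.sum_eq_zero
      intro k _
      rcases lt_or_ge k i with h' | h'
      · rw [ha i k h', zero_mul]
      · rw [hb k j (lt_of_lt_of_le hij h'), mul_zero]
    intro i j hij
    rw [Ring.lie_def, Matrix.sub_apply, key x y hx hy i j hij, key y x hy hx i j hij, sub_zero]

/-- The coadjoint action `(x · f)(v) = f ⁅v, x⁆` of `uₙ` on its dual. -/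
noncomputable def coact (x : un n K) (f : Module.Dual K (un n K)) : Module.Dual K (un n K) :=
  f ∘ₗ (-(LieAlgebra.ad K (un n K) x))

/-- The semidirect product bracket `[(x,f),(y,g)] = ([x,y], x·g - y·f)` on `uₙ ⋉ uₙ*`,
where `uₙ*` is abelian with the coadjoint `uₙ`-action. -/
noncomputable def sd (p q : un n K × Module.Dual K (un n K)) :
    un n K × Module.Dual K (un n K) :=
  (⁅p.1, q.1⁆, coact n K p.1 q.2 - coact n K q.1 p.2)

/-- The matrix unit `e_{ij}` (for `i ≤ j`) as an element of `uₙ`. -/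
noncomputable def eU (i j : Fin n) (hij : i ≤ j) : un n K :=
  ⟨Matrix.single i j 1, by
    intro a b hba
    by_cases hia : i = a
    · by_cases hjb : j = b
      · exact absurd hba (not_lt.mpr (hjb ▸ hia ▸ hij))
      · simp [Matrix.single, hjb]
    · simp [Matrix.single, hia]⟩

/-- The dual basis element `e_{ij}*` (for `i ≤ j`): on the basis `{e_{kl} : k ≤ l}` of `uₙ`
it is the functional reading off the `(i,j)` entry. -/
noncomputable def estar (i j : Fin n) : Module.Dual K (un n K) where
  toFun M := (M : Matrix (Fin n) (Fin n) K) i j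
  map_add' := by intros; rfl
  map_smul' := by intros; rfl

/-- The linear map `Iuₙ → uₙ ⋉ uₙ*` of Statement 2: `x_{ij} ↦ (e_{ij}, 0)` for `i < j`,
`x_{ij} ↦ (0, e_{ji}*)` for `i > j`, `a_i ↦ (e_{ii}, 0)`, `b_i ↦ (0, 2 e_{ii}*)`. -/
noncomputable def T : Iu n K →ₗ[K] un n K × Module.Dual K (un n K) :=
  Finsupp.lift (un n K × Module.Dual K (un n K)) K (IuIdx n) fun t =>
    match t with
    | Sum.inl ⟨(i, j), _⟩ =>
        if hij : i < j then (eU n K i j hij.le, 0) else (0, estar n K j i)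
    | Sum.inr (Sum.inl i) => (eU n K i i le_rfl, 0)
    | Sum.inr (Sum.inr i) => (0, (2 : K) • estar n K i i)

/-!
`T` sends the basis `x_{ij}, a_i, b_i` of `Iuₙ` to the basis `(e_{ij}, 0), (0, e_{ij}*)` of
`uₙ ⋉ uₙ*`, up to the unit `2` on the `b_i`, so it is a linear isomorphism. Both brackets are
bilinear and antisymmetric, so it suffices to compare them on unordered pairs of basis vectors.
The truncation `λ(i,j) + λ(k,l) < n` is what makes this work: for an upper `x_{ij}` and a lower
`x_{jl}` it holds exactly when `l < i`, i.e. exactly when the functional `e_{li}*` produced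
by the coadjoint action is not zero on `uₙ`; for two lower `x`'s it never holds, as `uₙ*` is
abelian.
-/

section

variable {n K} {i j k l : Fin n}

lemma coact_apply (x : un n K) (f : Module.Dual K (un n K)) (M : un n K) :
    coact n K x f M = f ⁅M, x⁆ := by
  rw [← lie_skew]
  rfl

lemma coact_smul_right (c : K) (x : un n K) (f : Module.Dual K (un n K)) :
    coact n K x (c • f) = c • coact n K x f := rfl

lemma sd_swap (p q : un n K × Module.Dual K (un n K)) : sd n K q p = -sd n K p q := by
  ext : 1
  · exact (lie_skew _ _).symm
  · exact (neg_sub _ _).symm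

lemma sd_upper_upper (x y : un n K) : sd n K (x, 0) (y, 0) = (⁅x, y⁆, 0) := by
  ext : 1 <;> simp [sd, coact]

lemma sd_upper_dual (x : un n K) (g : Module.Dual K (un n K)) :
    sd n K (x, 0) (0, g) = (0, coact n K x g) := by
  ext : 1 <;> simp [sd, coact]

lemma sd_dual_dual (f g : Module.Dual K (un n K)) : sd n K (0, f) (0, g) = 0 := by
  ext : 1 <;> simp [sd, coact]

variable (n K) in
noncomputable def sdₗ :
    un n K × Module.Dual K (un n K) →ₗ[K] un n K × Module.Dual K (un n K) →ₗ[K]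
      un n K × Module.Dual K (un n K) :=
  LinearMap.mk₂ K (sd n K)
    (fun _ _ _ => by ext <;> simp [sd, coact_apply, add_lie]; abel)
    (fun _ _ _ => by ext <;> simp [sd, coact_apply, smul_lie, mul_sub])
    (fun _ _ _ => by ext <;> simp [sd, coact_apply, lie_add]; abel)
    (fun _ _ _ => by ext <;> simp [sd, coact_apply, lie_smul, mul_sub])

@[simp]
lemma estar_apply (i j : Fin n) (M : un n K) :
    estar n K i j M = (M : Matrix (Fin n) (Fin n) K) i j := rfl

@[simp]
lemma coe_eU (h : i ≤ j) :
    (eU n K i j h : Matrix (Fin n) (Fin n) K) = Matrix.single i j 1 := rfl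

lemma estar_eq_zero_of_lt (h : j < i) : estar n K i j = 0 := by
  ext M; exact M.2 i j h

lemma lie_single_single (i j k l : Fin n) :
    ⁅Matrix.single i j (1 : K), Matrix.single k l (1 : K)⁆ =
      (if j = k then Matrix.single i l 1 else 0) - (if l = i then Matrix.single k j 1 else 0) := by
  rw [Ring.lie_def]
  by_cases hjk : j = k <;> by_cases hli : l = i <;>
    simp [hjk, hli, Matrix.single_mul_single_same, Matrix.single_mul_single_of_ne]

lemma coact_eU_estar (hij : i ≤ j) (k l : Fin n) :
    coact n K (eU n K i j hij) (estar n K k l) =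
      (if l = j then estar n K k i else 0) - (if k = i then estar n K j l else 0) := by
  ext M
  rw [coact_apply, LinearMap.sub_apply, estar_apply, LieSubalgebra.coe_bracket, Ring.lie_def,
    Matrix.sub_apply, coe_eU]
  by_cases hlj : l = j <;> by_cases hki : k = i <;>
    simp [hlj, hki, Matrix.mul_single_apply_same, Matrix.single_mul_apply_same,
      Matrix.mul_single_apply_of_ne, Matrix.single_mul_apply_of_ne]

lemma lam_of_lt (h : i < j) : lam n i j = j - i := Fin.coe_sub_iff_le.2 h.le

lemma lam_of_gt (h : j < i) : lam n i j = n + j - i := Fin.coe_sub_iff_lt.2 h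

lemma xe_of_ne (h : i ≠ j) : xe n K i j = xE n K i j h := dif_pos h

lemma bb_inl_inl (hij : i ≠ j) (hkl : k ≠ l) (hb : ¬(k = j ∧ l = i)) :
    bb n K (.inl ⟨(i, j), hij⟩) (.inl ⟨(k, l), hkl⟩) =
      if lam n i j + lam n k l < n then
        (if j = k then xe n K i l else 0) - (if l = i then xe n K k j else 0)
      else 0 := by
  simp only [bb, if_neg hb]

lemma bb_swap (s t : IuIdx n) : bb n K t s = -bb n K s t := by
  rcases s with ⟨⟨i, j⟩, hij⟩ | i | i <;> rcases t with ⟨⟨k, l⟩, hkl⟩ | k | k <;>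
    simp only [bb, neg_neg, neg_zero]
  by_cases hb : k = j ∧ l = i
  · obtain ⟨rfl, rfl⟩ := hb
    simp [← smul_neg]
  · have hb' : ¬(i = l ∧ j = k) := fun ⟨h₁, h₂⟩ => hb ⟨h₂.symm, h₁.symm⟩
    simp only [hb, hb', if_false, add_comm (lam n k l)]
    split_ifs <;> abel

lemma T_xE_of_lt (h : i < j) : T n K (xE n K i j h.ne) = (eU n K i j h.le, 0) := by
  simp [T, xE, h]

lemma T_xE_of_gt (h : j < i) : T n K (xE n K i j h.ne') = (0, estar n K j i) := by
  simp [T, xE, lt_asymm h]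

lemma T_aE (i : Fin n) : T n K (aE n K i) = (eU n K i i le_rfl, 0) := by
  simp [T, aE]

lemma T_bE (i : Fin n) : T n K (bE n K i) = (0, (2 : K) • estar n K i i) := by
  simp [T, bE]

abbrev UpperIdx (n : ℕ) : Type := {p : Fin n × Fin n // p.1 ≤ p.2}

variable (n K) in
def unEquivFun : un n K ≃ₗ[K] (UpperIdx n → K) where
  toFun M p := (M : Matrix (Fin n) (Fin n) K) p.1.1 p.1.2
  invFun g := ⟨fun i j => if h : i ≤ j then g ⟨(i, j), h⟩ else 0,
    fun _ _ hji => dif_neg (not_le.2 hji)⟩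
  map_add' _ _ := rfl
  map_smul' _ _ := rfl
  left_inv M := by
    ext i j
    by_cases h : i ≤ j
    · simp [h]
    · simp [h, M.2 i j (not_le.1 h)]
  right_inv g := funext fun p => dif_pos p.2

variable (n K) in
noncomputable def unBasis : Module.Basis (UpperIdx n) K (un n K) :=
  .ofEquivFun (unEquivFun n K)

lemma unBasis_apply (p : UpperIdx n) : unBasis n K p = eU n K p.1.1 p.1.2 p.2 := by
  classical
  rw [unBasis, Module.Basis.coe_ofEquivFun]
  ext i j
  obtain ⟨⟨a, b⟩, hab⟩ := p
  by_cases h : i ≤ j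
  · simp [unEquivFun, eU, Matrix.single_apply, Pi.single_apply, h, Subtype.ext_iff, eq_comm]
  · have : ¬(a = i ∧ b = j) := by rintro ⟨rfl, rfl⟩; exact h hab
    simp [unEquivFun, eU, h, this]

lemma unBasis_coord (p : UpperIdx n) : (unBasis n K).coord p = estar n K p.1.1 p.1.2 := by
  ext M
  simp [unBasis, Module.Basis.ofEquivFun_repr_apply, unEquivFun, estar]
  rfl

variable (n) in
def iuIdxEquiv : IuIdx n ≃ UpperIdx n ⊕ UpperIdx n where
  toFun
    | .inl ⟨(i, j), _⟩ =>
      if h : i < j then .inl ⟨(i, j), h.le⟩ else .inr ⟨(j, i), not_lt.1 h⟩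
    | .inr (.inl i) => .inl ⟨(i, i), le_rfl⟩
    | .inr (.inr i) => .inr ⟨(i, i), le_rfl⟩
  invFun
    | .inl ⟨(i, j), _⟩ => if h : i = j then .inr (.inl i) else .inl ⟨(i, j), h⟩
    | .inr ⟨(i, j), _⟩ => if h : i = j then .inr (.inr i) else .inl ⟨(j, i), Ne.symm h⟩
  left_inv := by
    rintro (⟨⟨i, j⟩, h⟩ | i | i)
    · rcases lt_or_gt_of_ne h with h' | h'
      · simp [h', h]
      · simp [not_lt.2 h'.le, h.symm]
    · simp
    · simp
  right_inv := by
    rintro (⟨⟨i, j⟩, h : i ≤ j⟩ | ⟨⟨i, j⟩, h : i ≤ j⟩)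
    · rcases eq_or_lt_of_le h with rfl | h'
      · simp
      · simp [h', h'.ne]
    · rcases eq_or_lt_of_le h with rfl | h'
      · simp
      · simp [h'.ne, not_lt.2 h'.le]

variable (K) in
def iuScale : IuIdx n → K
  | .inr (.inr _) => 2
  | _ => 1

lemma isUnit_iuScale (hK : (2 : K) ≠ 0) (s : IuIdx n) : IsUnit (iuScale K s) := by
  rcases s with _ | _ | _ <;> simp [iuScale, hK]

lemma T_single (s : IuIdx n) :
    T n K (Finsupp.single s 1) =
      iuScale K s • (unBasis n K).prod (unBasis n K).dualBasis (iuIdxEquiv n s) := by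
  rcases s with ⟨⟨i, j⟩, h⟩ | i | i
  · by_cases h' : i < j
    · simp [T, iuScale, iuIdxEquiv, h', unBasis_apply]
    · simp [T, iuScale, iuIdxEquiv, h', unBasis_coord]
  · simp [T, iuScale, iuIdxEquiv, unBasis_apply]
  · simp [T, iuScale, iuIdxEquiv, unBasis_coord]

theorem T_bijective (hK : (2 : K) ≠ 0) : Function.Bijective (T n K) := by
  let B := ((unBasis n K).prod (unBasis n K).dualBasis).reindex (iuIdxEquiv n).symm
  have hT : T n K = Finsupp.basisSingleOne.equiv (B.isUnitSMul (isUnit_iuScale hK)) (.refl _) :=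
    Finsupp.basisSingleOne.ext fun s => by
      rw [LinearEquiv.coe_coe, Module.Basis.equiv_apply, Module.Basis.isUnitSMul_apply,
        Module.Basis.reindex_apply, Equiv.symm_symm, Equiv.refl_apply,
        Finsupp.coe_basisSingleOne, T_single]
  rw [hT]
  exact LinearEquiv.bijective _

lemma T_bb_xE_xE_of_lt_of_lt (hij : i < j) (hkl : k < l) :
    T n K (bb n K (.inl ⟨(i, j), hij.ne⟩) (.inl ⟨(k, l), hkl.ne⟩)) =
      sd n K (T n K (xE n K i j hij.ne)) (T n K (xE n K k l hkl.ne)) := by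
  have hb : ¬(k = j ∧ l = i) := fun ⟨h₁, h₂⟩ => lt_asymm hij (h₂ ▸ h₁ ▸ hkl)
  rw [bb_inl_inl _ _ hb, T_xE_of_lt hij, T_xE_of_lt hkl, sd_upper_upper]
  rcases eq_or_ne j k with rfl | hjk
  · have hil : i < l := hij.trans hkl
    have hC : lam n i j + lam n j l < n := by
      rw [lam_of_lt hij, lam_of_lt hkl]; omega
    rw [if_pos hC, if_pos rfl, if_neg hil.ne', sub_zero, xe_of_ne hil.ne, T_xE_of_lt hil]
    ext : 2 <;> simp [lie_single_single, hil.ne']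
  rcases eq_or_ne l i with rfl | hli
  · have hkj : k < j := hkl.trans hij
    have hC : lam n l j + lam n k l < n := by
      rw [lam_of_lt hij, lam_of_lt hkl]; omega
    rw [if_pos hC, if_pos rfl, if_neg hjk, zero_sub, xe_of_ne hkj.ne, map_neg, T_xE_of_lt hkj]
    ext : 2 <;> simp [lie_single_single, hjk]
  · rw [if_neg hjk, if_neg hli, sub_zero, ite_self, map_zero]
    ext : 2 <;> simp [lie_single_single, hjk, hli]

lemma T_bb_xE_xE_of_lt_of_gt (hK : (2 : K) ≠ 0) (hij : i < j) (hlk : l < k) :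
    T n K (bb n K (.inl ⟨(i, j), hij.ne⟩) (.inl ⟨(k, l), hlk.ne'⟩)) =
      sd n K (T n K (xE n K i j hij.ne)) (T n K (xE n K k l hlk.ne')) := by
  rw [T_xE_of_lt hij, T_xE_of_gt hlk, sd_upper_dual, coact_eU_estar]
  by_cases hb : k = j ∧ l = i
  · obtain ⟨rfl, rfl⟩ := hb
    simp [bb, T_bE, smul_sub, smul_smul, hK]
  rw [bb_inl_inl _ _ hb]
  rcases eq_or_ne j k with rfl | hjk
  · have hli : l ≠ i := fun h => hb ⟨rfl, h⟩
    rcases lt_or_gt_of_ne hli with hli' | hil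
    · have hC : lam n i j + lam n j l < n := by
        rw [lam_of_lt hij, lam_of_gt hlk]; omega
      rw [if_pos hC, if_pos rfl, if_neg hli, sub_zero, xe_of_ne hli'.ne', T_xE_of_gt hli']
      simp [hli]
    · have hC : ¬lam n i j + lam n j l < n := by
        rw [lam_of_lt hij, lam_of_gt hlk]; omega
      rw [if_neg hC, map_zero]
      simp [estar_eq_zero_of_lt hil, hli, Prod.mk_zero_zero]
  rcases eq_or_ne l i with rfl | hli
  · rcases lt_or_gt_of_ne hjk with hjk' | hkj
    · have hC : lam n l j + lam n k l < n := by
        rw [lam_of_lt hij, lam_of_gt hlk]; omega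
      rw [if_pos hC, if_neg hjk, if_pos rfl, zero_sub, xe_of_ne hjk'.ne', map_neg,
        T_xE_of_gt hjk']
      simp [hjk.symm]
    · have hC : ¬lam n l j + lam n k l < n := by
        rw [lam_of_lt hij, lam_of_gt hlk]; omega
      rw [if_neg hC, map_zero]
      simp [estar_eq_zero_of_lt hkj, hjk.symm, Prod.mk_zero_zero]
  · rw [if_neg hjk, if_neg hli, sub_zero, ite_self, map_zero]
    simp [hjk.symm, hli, Prod.mk_zero_zero]

lemma T_bb_xE_xE_of_gt_of_gt (hji : j < i) (hlk : l < k) :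
    T n K (bb n K (.inl ⟨(i, j), hji.ne'⟩) (.inl ⟨(k, l), hlk.ne'⟩)) =
      sd n K (T n K (xE n K i j hji.ne')) (T n K (xE n K k l hlk.ne')) := by
  have hb : ¬(k = j ∧ l = i) := fun ⟨h₁, h₂⟩ => lt_asymm hji (h₂ ▸ h₁ ▸ hlk)
  have hC : (j = k ∨ l = i) → ¬lam n i j + lam n k l < n := by
    rw [lam_of_gt hji, lam_of_gt hlk]; omega
  rw [bb_inl_inl _ _ hb, T_xE_of_gt hji, T_xE_of_gt hlk, sd_dual_dual]
  by_cases hjk : j = k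
  · rw [if_neg (hC (.inl hjk)), map_zero]
  by_cases hli : l = i
  · rw [if_neg (hC (.inr hli)), map_zero]
  simp [hjk, hli]

lemma T_bb_aE_xE (i j k : Fin n) (hjk : j ≠ k) :
    T n K (bb n K (.inr (.inl i)) (.inl ⟨(j, k), hjk⟩)) =
      sd n K (T n K (aE n K i)) (T n K (xE n K j k hjk)) := by
  simp only [bb]
  rw [T_aE, xe_of_ne hjk, map_smul]
  rcases lt_or_gt_of_ne hjk with hjk' | hkj
  · rw [T_xE_of_lt hjk', sd_upper_upper]
    rcases eq_or_ne i j with rfl | hij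
    · ext : 2 <;> simp [lie_single_single, hjk, hjk.symm]
    rcases eq_or_ne i k with rfl | hik
    · ext : 2 <;> simp [lie_single_single, hij]
    · ext : 2 <;> simp [lie_single_single, hij, hik, hik.symm]
  · rw [T_xE_of_gt hkj, sd_upper_dual, coact_eU_estar]
    rcases eq_or_ne i j with rfl | hij
    · ext : 2 <;> simp [hjk, hjk.symm]
    rcases eq_or_ne i k with rfl | hik
    · ext : 2 <;> simp [hij, hij.symm]
    · ext : 2 <;> simp [hij, hik, hij.symm, hik.symm]

lemma T_bb_bE_xE (i j k : Fin n) (hjk : j ≠ k) :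
    T n K (bb n K (.inr (.inr i)) (.inl ⟨(j, k), hjk⟩)) =
      sd n K (T n K (bE n K i)) (T n K (xE n K j k hjk)) := by
  rw [show bb n K (.inr (.inr i)) (.inl ⟨(j, k), hjk⟩) = 0 from rfl, map_zero, T_bE]
  rcases lt_or_gt_of_ne hjk with hjk' | hkj
  · rw [T_xE_of_lt hjk', sd_swap, sd_upper_dual, coact_smul_right, coact_eU_estar]
    by_cases hik : i = k <;> by_cases hij : i = j <;>
      simp_all [estar_eq_zero_of_lt hjk', Prod.mk_zero_zero]
  · rw [T_xE_of_gt hkj, sd_dual_dual]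

lemma T_bb_aE_aE (i j : Fin n) :
    T n K (bb n K (.inr (.inl i)) (.inr (.inl j))) =
      sd n K (T n K (aE n K i)) (T n K (aE n K j)) := by
  rw [show bb n K (.inr (.inl i)) (.inr (.inl j)) = 0 from rfl, map_zero, T_aE, T_aE,
    sd_upper_upper]
  rcases eq_or_ne i j with rfl | hij
  · ext : 2 <;> simp
  · ext : 2 <;> simp [lie_single_single, hij, hij.symm]

lemma T_bb_aE_bE (i j : Fin n) :
    T n K (bb n K (.inr (.inl i)) (.inr (.inr j))) =
      sd n K (T n K (aE n K i)) (T n K (bE n K j)) := by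
  rw [show bb n K (.inr (.inl i)) (.inr (.inr j)) = 0 from rfl, map_zero, T_aE, T_bE,
    sd_upper_dual, coact_smul_right, coact_eU_estar]
  by_cases hij : j = i <;> simp_all [Prod.mk_zero_zero]

lemma T_bb_bE_bE (i j : Fin n) :
    T n K (bb n K (.inr (.inr i)) (.inr (.inr j))) =
      sd n K (T n K (bE n K i)) (T n K (bE n K j)) := by
  rw [show bb n K (.inr (.inr i)) (.inr (.inr j)) = 0 from rfl, map_zero, T_bE, T_bE,
    sd_dual_dual]

lemma T_bb_swap {s t : IuIdx n}
    (h : T n K (bb n K s t) = sd n K (T n K (.single s 1)) (T n K (.single t 1))) :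
    T n K (bb n K t s) = sd n K (T n K (.single t 1)) (T n K (.single s 1)) := by
  rw [bb_swap, map_neg, h, sd_swap, neg_neg]

lemma T_bb (hK : (2 : K) ≠ 0) (s t : IuIdx n) :
    T n K (bb n K s t) = sd n K (T n K (.single s 1)) (T n K (.single t 1)) := by
  rcases s with ⟨⟨i, j⟩, hij⟩ | i | i <;> rcases t with ⟨⟨k, l⟩, hkl⟩ | k | k
  · rcases lt_or_gt_of_ne hij with hij | hji <;> rcases lt_or_gt_of_ne hkl with hkl | hlk
    · exact T_bb_xE_xE_of_lt_of_lt hij hkl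
    · exact T_bb_xE_xE_of_lt_of_gt hK hij hlk
    · exact T_bb_swap (T_bb_xE_xE_of_lt_of_gt hK hkl hji)
    · exact T_bb_xE_xE_of_gt_of_gt hji hlk
  · exact T_bb_swap (T_bb_aE_xE k i j hij)
  · exact T_bb_swap (T_bb_bE_xE k i j hij)
  · exact T_bb_aE_xE i k l hkl
  · exact T_bb_aE_aE i k
  · exact T_bb_aE_bE i k
  · exact T_bb_bE_xE i k l hkl
  · exact T_bb_swap (T_bb_aE_bE k i)
  · exact T_bb_bE_bE i k

theorem T_br (hK : (2 : K) ≠ 0) (u v : Iu n K) :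
    T n K (br n K u v) = sd n K (T n K u) (T n K v) := by
  have : (br n K).compr₂ (T n K) = (sdₗ n K).compl₁₂ (T n K) (T n K) :=
    Finsupp.basisSingleOne.ext fun s => Finsupp.basisSingleOne.ext fun t => by
      simpa [br, sdₗ] using T_bb hK s t
  exact LinearMap.congr_fun₂ this u v

end

theorem stmt2_general (n : ℕ) (K : Type*) [Field K] (hK : (2 : K) ≠ 0) :
    Function.Bijective (T n K) ∧
    ∀ u v : Iu n K, T n K (br n K u v) = sd n K (T n K u) (T n K v) :=
  ⟨T_bijective hK, T_br hK⟩

/-- `T` is an isomorphism of Lie algebras from `Iuₙ` to `uₙ ⋉ uₙ*`. -/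
theorem stmt2 (n : ℕ) (hn : 2 ≤ n) (K : Type*) [Field K] (hK : (2 : K) ≠ 0) :
    Function.Bijective (T n K) ∧
    ∀ u v : Iu n K, T n K (br n K u v) = sd n K (T n K u) (T n K v) :=
  stmt2_general n K hK
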